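/- arXiv:2503.04864 — 3 statements merged into one kernel-verified Lean document; each statement's English description precedes it below -/
import Mathlib

section
/- Let k be a commutative ring, G a group, M a flat kG-module and N a kG-module that is flat as a k-module. Then the diagonal kG-module M ⊗_k N is flat. -/
open TensorProduct CategoryTheory

noncomputable section

namespace GroupRings

/-- Equational criterion definition of flatness of a left module over a
(possibly noncommutative) ring: every linear relation is trivializable. -/
def FlatMod (A : Type) [Ring A] (M : Type) [AddCommGroup M] [Module A M] : Prop :=
  ∀ (n : ℕ) (a : Fin n → A) (x : Fin n → M), (∑ i, a i • x i) = 0 →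
    ∃ (m : ℕ) (b : Fin n → Fin m → A) (y : Fin m → M),
      (∀ i, x i = ∑ j, b i j • y j) ∧ ∀ j, (∑ i, a i * b i j) = 0

/-- `Ext¹_A(M,N) = 0`, expressed as: every short exact sequence
`0 → N → E → M → 0` splits. -/
def Ext1Zero (A : Type) [Ring A] (M N : Type) [AddCommGroup M] [Module A M]
    [AddCommGroup N] [Module A N] : Prop :=
  ∀ (E : Type) [AddCommGroup E] [Module A E], ∀ (i : N →ₗ[A] E) (p : E →ₗ[A] M),
    Function.Injective i → Function.Surjective p → LinearMap.range i = LinearMap.ker p →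
    ∃ s : M →ₗ[A] E, p.comp s = LinearMap.id

/-- `ExtZero A n M N` means `Ext^{n+1}_A(M,N) = 0`, via dimension shifting. -/
def ExtZero (A : Type) [Ring A] : ℕ → ModuleCat.{0} A → ModuleCat.{0} A → Prop
  | 0, M, N => Ext1Zero A M N
  | n + 1, M, N => ∀ (K P : ModuleCat.{0} A) (i : K →ₗ[A] P) (p : P →ₗ[A] M),
      Module.Projective A P → Function.Injective i → Function.Surjective p →
      LinearMap.range i = LinearMap.ker p → ExtZero A n K N

/-- flat dimension at most `n` -/
def flatDimLE (A : Type) [Ring A] : ℕ → ModuleCat.{0} A → Prop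
  | 0, M => FlatMod A M
  | n + 1, M => ∃ (F : ModuleCat.{0} A) (p : F →ₗ[A] M), FlatMod A F ∧
      Function.Surjective p ∧ flatDimLE A n (ModuleCat.of A (LinearMap.ker p))

/-- injective dimension at most `n` -/
def injDimLE (A : Type) [Ring A] : ℕ → ModuleCat.{0} A → Prop
  | 0, M => Module.Injective A M
  | n + 1, M => ∃ (I : ModuleCat.{0} A) (f : M →ₗ[A] I), Module.Injective A I ∧
      Function.Injective f ∧ injDimLE A n (ModuleCat.of A (I ⧸ LinearMap.range f))

/-- a cotorsion module: `Ext¹(F, N) = 0` for every flat `F` -/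
def IsCotorsion (A : Type) [Ring A] (N : ModuleCat.{0} A) : Prop :=
  ∀ F : ModuleCat.{0} A, FlatMod A F → Ext1Zero A F N

/-- purity of a monomorphism, via the standard equational characterization -/
def IsPureMono {A : Type} [Ring A] {M N : Type} [AddCommGroup M] [Module A M]
    [AddCommGroup N] [Module A N] (i : M →ₗ[A] N) : Prop :=
  Function.Injective i ∧
    ∀ (m n : ℕ) (a : Fin m → Fin n → A) (x : Fin m → M),
      (∃ y : Fin n → N, ∀ j, (∑ l, a j l • y l) = i (x j)) →
      ∃ z : Fin n → M, ∀ j, (∑ l, a j l • z l) = x j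

/-- right Ext¹-orthogonal of a class of modules -/
def RightPerp (A : Type) [Ring A] (C : ModuleCat.{0} A → Prop) (N : ModuleCat.{0} A) : Prop :=
  ∀ M : ModuleCat.{0} A, C M → Ext1Zero A M N

/-- left Ext¹-orthogonal of a class of modules -/
def LeftPerp (A : Type) [Ring A] (C : ModuleCat.{0} A → Prop) (M : ModuleCat.{0} A) : Prop :=
  ∀ N : ModuleCat.{0} A, C N → Ext1Zero A M N

/-- The character module `Hom_ℤ(I, ℚ/ℤ)` of a right `A`-module `I`,
which is a left `A`-module via `(a • φ) x = φ (x a)`. -/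
abbrev RightDual (A : Type) [Ring A] (I : Type) [AddCommGroup I] [Module Aᵐᵒᵖ I] : Type :=
  I →+ AddCircle (1 : ℚ)

instance (A : Type) [Ring A] (I : Type) [AddCommGroup I] [Module Aᵐᵒᵖ I] :
    Module A (RightDual A I) where
  smul a φ :=
    { toFun := fun x => φ (MulOpposite.op a • x)
      map_zero' := by simp
      map_add' := fun x y => by simp [smul_add] }
  one_smul φ := by ext x; show φ ((MulOpposite.op (1:A)) • x) = φ x; rw [MulOpposite.op_one, one_smul]
  mul_smul a b φ := by
    ext x
    show φ (MulOpposite.op (a * b) • x) = φ (MulOpposite.op b • MulOpposite.op a • x)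
    rw [MulOpposite.op_mul, mul_smul]
  smul_zero a := by ext x; rfl
  smul_add a φ ψ := by ext x; rfl
  add_smul a b φ := by
    ext x
    show φ ((MulOpposite.op a + MulOpposite.op b) • x) = φ (MulOpposite.op a • x) + φ (MulOpposite.op b • x)
    rw [add_smul, map_add]
  zero_smul φ := by ext x; show φ ((0 : Aᵐᵒᵖ) • x) = 0; rw [zero_smul, map_zero]

/-- `M` is a Gorenstein flat left `A`-module: `M` is a cokernel of an acyclic complex
of flat modules (given by its spliced short exact sequences with cokernels `C n`)
which stays acyclic after `I ⊗_A —` for every injective right `A`-module `I`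
(expressed, equivalently by character module duality, as the vanishing of
`Ext¹_A(C n, (I)⋆)`). -/
def IsGFlat (A : Type) [Ring A] (M : ModuleCat.{0} A) : Prop :=
  ∃ (C F : ℤ → ModuleCat.{0} A) (ι : ∀ n, C (n + 1) →ₗ[A] F n) (π : ∀ n, F n →ₗ[A] C n),
    (∀ n, FlatMod A (F n)) ∧ (∀ n, Function.Injective (ι n)) ∧
    (∀ n, Function.Surjective (π n)) ∧
    (∀ n, LinearMap.range (ι n) = LinearMap.ker (π n)) ∧
    Nonempty ((C 0 : Type) ≃ₗ[A] M) ∧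
    (∀ (I : Type) [AddCommGroup I] [Module Aᵐᵒᵖ I], Module.Injective Aᵐᵒᵖ I →
      ∀ n, Ext1Zero A (C n) (RightDual A I))

/-- `M` is a projectively coresolved Gorenstein flat left `A`-module. -/
def IsPGF (A : Type) [Ring A] (M : ModuleCat.{0} A) : Prop :=
  ∃ (C F : ℤ → ModuleCat.{0} A) (ι : ∀ n, C (n + 1) →ₗ[A] F n) (π : ∀ n, F n →ₗ[A] C n),
    (∀ n, Module.Projective A (F n)) ∧ (∀ n, Function.Injective (ι n)) ∧
    (∀ n, Function.Surjective (π n)) ∧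
    (∀ n, LinearMap.range (ι n) = LinearMap.ker (π n)) ∧
    Nonempty ((C 0 : Type) ≃ₗ[A] M) ∧
    (∀ (I : Type) [AddCommGroup I] [Module Aᵐᵒᵖ I], Module.Injective Aᵐᵒᵖ I →
      ∀ n, Ext1Zero A (C n) (RightDual A I))

end GroupRings

namespace GroupRings

variable (k : Type) [CommRing k] (G : Type) [Group G]

/-- The `k`-submodule of `G → k` consisting of the functions with finite image. -/
def finImage : Submodule k (G → k) where
  carrier := {f | (Set.range f).Finite}
  add_mem' := by
    intro f g hf hg
    apply (hf.image2 (· + ·) hg).subset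
    rintro _ ⟨x, rfl⟩
    exact Set.mem_image2_of_mem ⟨x, rfl⟩ ⟨x, rfl⟩
  zero_mem' := by
    apply (Set.finite_singleton (0 : k)).subset
    rintro _ ⟨x, rfl⟩
    rfl
  smul_mem' := by
    intro c f hf
    apply (hf.image (c * ·)).subset
    rintro _ ⟨x, rfl⟩
    exact ⟨f x, ⟨x, rfl⟩, rfl⟩

/-- Benson's module `B`: the `kG`-module of finitely-valued functions `G → k`,
with `G` acting by translation. -/
def bRep : Representation k G (finImage k G) where
  toFun g :=
    { toFun := fun f => ⟨fun x => f.1 (g⁻¹ * x), by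
        apply f.2.subset
        rintro _ ⟨x, rfl⟩
        exact ⟨g⁻¹ * x, rfl⟩⟩
      map_add' := fun f₁ f₂ => rfl
      map_smul' := fun c f => rfl }
  map_one' := by
    ext f x
    show f.1 ((1 : G)⁻¹ * x) = f.1 x
    rw [inv_one, one_mul]
  map_mul' g h := by
    ext f x
    show f.1 ((g * h)⁻¹ * x) = f.1 (h⁻¹ * (g⁻¹ * x))
    rw [mul_inv_rev, mul_assoc]

/-- underlying function of an element of `B` (as a `kG`-module). -/
def bVal (f : (bRep k G).asModule) : G → k := f.1

/-- the diagonal `kG`-module `M ⊗_k B`. -/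
abbrev tensorB (M : ModuleCat.{0} (MonoidAlgebra k G)) : Type :=
  ((Representation.ofModule (k := k) (G := G) M).tprod (bRep k G)).asModule

/-- the diagonal `kG`-module `Hom_k(B, M)`. -/
abbrev homB (M : ModuleCat.{0} (MonoidAlgebra k G)) : Type :=
  ((bRep k G).linHom (Representation.ofModule (k := k) (G := G) M)).asModule

instance (M : ModuleCat.{0} (MonoidAlgebra k G)) : AddCommGroup (tensorB k G M) :=
  Module.addCommMonoidToAddCommGroup k

instance (M : ModuleCat.{0} (MonoidAlgebra k G)) : AddCommGroup (homB k G M) :=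
  Module.addCommMonoidToAddCommGroup k

/-- a cofibrant `kG`-module: `M ⊗_k B` is projective. -/
def IsCofibrant (M : ModuleCat.{0} (MonoidAlgebra k G)) : Prop :=
  Module.Projective (MonoidAlgebra k G) (tensorB k G M)

/-- a cofibrant-flat `kG`-module: `M ⊗_k B` is flat. -/
def IsCofibrantFlat (M : ModuleCat.{0} (MonoidAlgebra k G)) : Prop :=
  FlatMod (MonoidAlgebra k G) (tensorB k G M)

/-- a fibrant `kG`-module: `Hom_k(B, M)` is injective. -/
def IsFibrant (M : ModuleCat.{0} (MonoidAlgebra k G)) : Prop :=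
  Module.Injective (MonoidAlgebra k G) (homB k G M)

instance (V : Type) [AddCommGroup V] [Module k V] (ρ : Representation k G V) :
    SMulCommClass (MonoidAlgebra k G) k ρ.asModule :=
  ⟨fun r c x => map_smul (ρ.asAlgebraHom r) c x⟩

/-- the representation of `G` on the character module `Hom_ℤ(V, ℚ/ℤ)`,
`(g • φ) x = φ (g⁻¹ • x)`. -/
def charDual {V : Type} [AddCommGroup V] [Module k V] (ρ : Representation k G V) :
    Representation k G (CharacterModule V) where
  toFun g := CharacterModule.dual (ρ g⁻¹)
  map_one' := by
    ext φ x
    show φ (ρ (1 : G)⁻¹ x) = φ x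
    rw [inv_one, map_one, Module.End.one_apply]
  map_mul' g h := by
    ext φ x
    show φ (ρ (g * h)⁻¹ x) = φ (ρ h⁻¹ (ρ g⁻¹ x))
    rw [mul_inv_rev, map_mul, Module.End.mul_apply]

end GroupRings


namespace GroupRings
open LinearMap

theorem flat_relation {k : Type} [CommRing k] {V W : Type} [AddCommGroup V] [Module k V] [AddCommGroup W] [Module k W]
    [Module.Flat k W] {ι : Type} [Fintype ι] (m : ι → V) (w : ι → W)
    (h : (∑ l, m l ⊗ₜ[k] w l) = 0) :
    ∃ (q : ℕ) (c : ι → Fin q → k) (u : Fin q → W),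
      (∀ l, w l = ∑ s, c l s • u s) ∧ ∀ s, (∑ l, c l s • m l) = 0 := by
  classical
  set f : (ι → k) →ₗ[k] V := Fintype.linearCombination k m with hf
  have hfs : ∀ (κ : ι → k), f κ = ∑ l, κ l • m l := fun κ => by
    simp [hf, Fintype.linearCombination_apply]
  set ζ : (ι → k) ⊗[k] W := ∑ l, (Pi.single l 1 : ι → k) ⊗ₜ[k] w l with hζ
  have h1 : rTensor W f ζ = 0 := by
    rw [hζ, map_sum]
    simp only [rTensor_tmul]
    have : ∀ l, f (Pi.single l (1:k)) = m l := fun l => by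
      rw [hfs]
      simp [Pi.single_apply, ite_smul]
    simp only [this]; exact h
  have hex := Module.Flat.rTensor_exact (R := k) W (N := LinearMap.ker f)
      (f.exact_subtype_ker_map)
  obtain ⟨ξ, hξ⟩ := (hex ζ).mp h1
  obtain ⟨Sf, hSf⟩ := TensorProduct.exists_finset ξ
  set e : Fin Sf.card ≃ Sf := Sf.equivFin.symm with he
  refine ⟨Sf.card, fun l s => ((e s : (LinearMap.ker f) × W).1 : ι → k) l,
    fun s => (e s : (LinearMap.ker f) × W).2, ?_, ?_⟩
  · intro l
    have hζ2 : ζ = ∑ s, ((e s : (LinearMap.ker f) × W).1 : ι → k) ⊗ₜ[k]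
        (e s : (LinearMap.ker f) × W).2 := by
      rw [← hξ, hSf, map_sum]
      rw [← Finset.sum_coe_sort Sf]
      rw [← Equiv.sum_comp e (fun p => rTensor W (LinearMap.ker f).subtype ((p : (LinearMap.ker f) × W).1 ⊗ₜ[k] (p : (LinearMap.ker f) × W).2))]
      simp
    set E : (ι → k) ⊗[k] W →ₗ[k] W :=
      (TensorProduct.lid k W).toLinearMap ∘ₗ rTensor W (LinearMap.proj l : (ι → k) →ₗ[k] k) with hE
    have h2 := congrArg (fun z => E z) hζ2
    rw [hζ] at h2
    simpa [hE, map_sum, Pi.single_apply, ite_smul] using h2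
  · intro s
    rw [← hfs]
    exact (e s : (LinearMap.ker f) × W).1.2

theorem presLeft {k : Type} [CommRing k] {V W : Type} [AddCommGroup V] [Module k V]
    [AddCommGroup W] [Module k W] {n : ℕ} (x : Fin n → V ⊗[k] W) :
    ∃ (T : ℕ) (v : Fin T → V) (w : Fin n → Fin T → W), ∀ i, x i = ∑ t, v t ⊗ₜ[k] w i t := by
  classical
  have hch := fun i => TensorProduct.exists_finset (x i)
  choose S hS using hch
  set J := (i : Fin n) × {p // p ∈ S i} with hJ
  set e : Fin (Fintype.card J) ≃ J := (Fintype.equivFin J).symm with he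
  refine ⟨Fintype.card J, fun t => ((e t).2 : V × W).1,
    fun i t => if (e t).1 = i then ((e t).2 : V × W).2 else 0, fun i => ?_⟩
  have key : x i = ∑ j : J, ((j.2 : V × W).1 ⊗ₜ[k] (if j.1 = i then ((j.2 : V × W).2) else 0)) := by
    have hin : ∀ i' : Fin n, (∑ p : {p // p ∈ S i'}, ((p : V × W).1 ⊗ₜ[k] (if i' = i then ((p : V × W).2) else 0)))
        = if i' = i then x i else 0 := by
      intro i'
      split_ifs with hii
      · subst hii
        rw [Finset.sum_coe_sort (S i') (fun p => p.1 ⊗ₜ[k] p.2)]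
        exact (hS i').symm
      · simp [tmul_zero]
    rw [← Finset.univ_sigma_univ, Finset.sum_sigma]
    simp only [hin, Finset.sum_ite_eq', Finset.mem_univ, if_true]
  rw [key]
  exact (Fintype.sum_equiv e _ _ fun t => rfl).symm

theorem presRight {k : Type} [CommRing k] {V W : Type} [AddCommGroup V] [Module k V]
    [AddCommGroup W] [Module k W] {n : ℕ} (x : Fin n → V ⊗[k] W) :
    ∃ (T : ℕ) (f : Fin n → Fin T → V) (w : Fin T → W), ∀ i, x i = ∑ t, f i t ⊗ₜ[k] w t := by
  obtain ⟨T, v, w, h⟩ := presLeft (fun i => TensorProduct.comm k V W (x i))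
  refine ⟨T, fun i t => w i t, v, fun i => ?_⟩
  have := congrArg (fun z => (TensorProduct.comm k V W).symm z) (h i)
  simpa [map_sum] using this

theorem flatMod_system {A M : Type} [Ring A] [AddCommGroup M] [Module A M]
    (hM : FlatMod A M) :
    ∀ (q : ℕ) {T : ℕ} (α : Fin q → Fin T → A) (m : Fin T → M),
      (∀ s, (∑ t, α s t • m t) = 0) →
      ∃ (P : ℕ) (β : Fin T → Fin P → A) (y : Fin P → M),
        (∀ t, m t = ∑ p, β t p • y p) ∧ ∀ s p, (∑ t, α s t * β t p) = 0 := by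
  intro q
  induction q with
  | zero =>
    intro T α m _
    classical
    exact ⟨T, fun t p => if t = p then 1 else 0, m,
      fun t => by simp [ite_smul], fun s => s.elim0⟩
  | succ q ih =>
    intro T α m h
    obtain ⟨m₁, b, y, hb1, hb2⟩ := hM T (α 0) m (h 0)
    have h' : ∀ s : Fin q, (∑ j, (∑ t, α s.succ t * b t j) • y j) = 0 := by
      intro s
      calc (∑ j, (∑ t, α s.succ t * b t j) • y j)
          = ∑ j, ∑ t, (α s.succ t * b t j) • y j := by
            simp [Finset.sum_smul]
        _ = ∑ t, α s.succ t • ∑ j, b t j • y j := by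
            simp only [Finset.smul_sum, Finset.sum_smul, mul_smul]
            exact Finset.sum_comm
        _ = 0 := by
            simp only [← hb1]; exact h s.succ
    obtain ⟨P, γ, z, hz1, hz2⟩ := ih (fun s j => ∑ t, α s.succ t * b t j) y h'
    refine ⟨P, fun t p => ∑ j, b t j * γ j p, z, ?_, ?_⟩
    · intro t
      calc m t = ∑ j, b t j • y j := hb1 t
        _ = ∑ j, b t j • ∑ p, γ j p • z p := by simp only [← hz1]
        _ = ∑ p, (∑ j, b t j * γ j p) • z p := by
            simp only [Finset.smul_sum, Finset.sum_smul, mul_smul]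
            exact Finset.sum_comm
    · intro s p
      refine Fin.cases ?_ ?_ s
      · calc (∑ t, α 0 t * (∑ j, b t j * γ j p))
            = ∑ j, (∑ t, α 0 t * b t j) * γ j p := by
              simp only [Finset.mul_sum, Finset.sum_mul, mul_assoc]
              exact Finset.sum_comm
          _ = 0 := by simp [hb2]
      · intro s'
        calc (∑ t, α s'.succ t * (∑ j, b t j * γ j p))
            = ∑ j, (∑ t, α s'.succ t * b t j) * γ j p := by
              simp only [Finset.mul_sum, Finset.sum_mul, mul_assoc]
              exact Finset.sum_comm
          _ = 0 := hz2 s' p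

theorem flat_free_tensor {k : Type} [CommRing k] {A : Type} [Ring A] [Algebra k A]
    {W : Type} [AddCommGroup W] [Module k W] [Module.Flat k W] (P : ℕ) :
    FlatMod A ((Fin P → A) ⊗[k] W) := by
  classical
  intro n a x hx
  obtain ⟨L, f, w, hf⟩ := presRight x
  set d : Fin L → (Fin P → A) := fun l => ∑ i, a i • f i l with hd
  have hrel : (∑ l, d l ⊗ₜ[k] w l) = 0 := by
    rw [← hx]
    simp only [hf, Finset.smul_sum, hd, sum_tmul, smul_tmul']
    exact Finset.sum_comm
  obtain ⟨q, c, u, hu, hc⟩ := flat_relation d w hrel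
  set e : Fin P × Fin q ≃ Fin (P * q) := finProdFinEquiv with he
  set b : Fin n → Fin (P * q) → A := fun i j => ∑ l, c l (e.symm j).2 • f i l (e.symm j).1 with hb
  set y : Fin (P * q) → (Fin P → A) ⊗[k] W :=
    fun j => (Pi.single (e.symm j).1 (1 : A) : Fin P → A) ⊗ₜ[k] u (e.symm j).2 with hy
  refine ⟨P * q, b, y, ?_, ?_⟩
  · intro i
    have hsum : (∑ j, b i j • y j) = ∑ ps : Fin P × Fin q,
        (∑ l, c l ps.2 • f i l ps.1) • ((Pi.single ps.1 (1 : A) : Fin P → A) ⊗ₜ[k] u ps.2) := by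
      refine (Fintype.sum_equiv e _ _ fun ps => ?_).symm
      simp [hb, hy]
    rw [hsum]
    have key : ∀ ps : Fin P × Fin q,
        (∑ l, c l ps.2 • f i l ps.1) • ((Pi.single ps.1 (1 : A) : Fin P → A) ⊗ₜ[k] u ps.2)
        = ∑ l, c l ps.2 • ((Pi.single ps.1 (f i l ps.1) : Fin P → A) ⊗ₜ[k] u ps.2) := by
      intro ps
      rw [smul_tmul', Finset.sum_smul]
      rw [sum_tmul]
      refine Finset.sum_congr rfl fun l _ => ?_
      have : (c l ps.2 • f i l ps.1) • (Pi.single ps.1 (1 : A) : Fin P → A)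
          = c l ps.2 • (Pi.single ps.1 (f i l ps.1) : Fin P → A) := by
        funext p
        by_cases hp : p = ps.1
        · subst hp; simp [Algebra.smul_def, Algebra.commutes]
        · simp [Pi.single_eq_of_ne hp]
      rw [this]
      exact (smul_tmul' _ _ _).symm
    simp only [key]
    symm
    rw [Fintype.sum_prod_type]
    calc (∑ p : Fin P, ∑ s : Fin q, ∑ l, c l s • ((Pi.single p (f i l p) : Fin P → A) ⊗ₜ[k] u s))
        = ∑ p : Fin P, ∑ l, (Pi.single p (f i l p) : Fin P → A) ⊗ₜ[k] (∑ s, c l s • u s) := by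
          refine Finset.sum_congr rfl fun p _ => ?_
          rw [Finset.sum_comm]
          simp [tmul_sum, tmul_smul, smul_tmul]
      _ = ∑ l, (∑ p : Fin P, (Pi.single p (f i l p) : Fin P → A)) ⊗ₜ[k] w l := by
          rw [Finset.sum_comm]
          simp [← hu, sum_tmul]
      _ = x i := by
          simp only [Finset.univ_sum_single]
          exact (hf i).symm
  · intro j
    have : (∑ i, a i * b i j) = ∑ l, c l (e.symm j).2 • (d l (e.symm j).1) := by
      simp only [hb, Finset.mul_sum, hd]
      rw [Finset.sum_comm]
      refine Finset.sum_congr rfl fun l _ => ?_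
      simp [mul_smul_comm, Finset.sum_apply, Finset.smul_sum]
    rw [this]
    have hc' := congrArg (fun v => v (e.symm j).1) (hc (e.symm j).2)
    simpa [Finset.sum_apply] using hc'


variable {k : Type} [CommRing k] {G : Type} [Group G]

instance instSMulComm {V : Type} [AddCommGroup V] [Module k V] (ρ : Representation k G V) :
    SMulCommClass (MonoidAlgebra k G) k ρ.asModule :=
  ⟨fun r c x => map_smul (ρ.asAlgebraHom r) c x⟩

instance instTower {V : Type} [AddCommGroup V] [Module k V] (ρ : Representation k G V) :
    IsScalarTower k (MonoidAlgebra k G) ρ.asModule :=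
  ⟨fun c a z => by
    show ρ.asAlgebraHom (c • a) z = c • (ρ.asAlgebraHom a z)
    rw [map_smul]; rfl⟩

theorem asModule_smul_def {V : Type} [AddCommGroup V] [Module k V] (ρ : Representation k G V)
    (a : MonoidAlgebra k G) (z : ρ.asModule) :
    ρ.asModuleEquiv (a • z) = ρ.asAlgebraHom a (ρ.asModuleEquiv z) := rfl

theorem asModuleEquiv_smul_k {V : Type} [AddCommGroup V] [Module k V] (ρ : Representation k G V)
    (c : k) (z : ρ.asModule) : ρ.asModuleEquiv (c • z) = c • ρ.asModuleEquiv z := rfl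

theorem asModuleEquiv_symm_smul_k {V : Type} [AddCommGroup V] [Module k V]
    (ρ : Representation k G V) (c : k) (v : V) :
    ρ.asModuleEquiv.symm (c • v) = c • ρ.asModuleEquiv.symm v := rfl

theorem single_one_smul_symm {V : Type} [AddCommGroup V] [Module k V] (ρ : Representation k G V)
    (g : G) (v : V) :
    (MonoidAlgebra.single g (1:k)) • ρ.asModuleEquiv.symm v
      = ρ.asModuleEquiv.symm (ρ g v) := by
  apply ρ.asModuleEquiv.injective
  rw [asModule_smul_def, Representation.asAlgebraHom_single_one]
  simp
  rfl

theorem single_one_smul_asModule {V : Type} [AddCommGroup V] [Module k V]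
    (ρ : Representation k G V) (g : G) (z : ρ.asModule) :
    ρ.asModuleEquiv ((MonoidAlgebra.single g (1:k)) • z)
      = ρ g (ρ.asModuleEquiv z) := by
  rw [asModule_smul_def, Representation.asAlgebraHom_single_one]

theorem smul_expand {Z : Type} [AddCommGroup Z] [Module (MonoidAlgebra k G) Z] [Module k Z]
    [IsScalarTower k (MonoidAlgebra k G) Z] (S : Finset G) (a : MonoidAlgebra k G)
    (ha : a.coeff.support ⊆ S) (z : Z) :
    a • z = ∑ g ∈ S, a.coeff g • ((MonoidAlgebra.single g (1:k)) • z) := by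
  have h1 : a = ∑ g ∈ S, MonoidAlgebra.single g (a.coeff g) := by
    conv_lhs => rw [← MonoidAlgebra.sum_coeff_single a]
    exact Finsupp.sum_of_support_subset a.coeff ha (fun g c => MonoidAlgebra.single g c) (by simp)
  conv_lhs => rw [h1]
  rw [Finset.sum_smul]
  refine Finset.sum_congr rfl fun g _ => ?_
  have : (MonoidAlgebra.single g (a.coeff g) : MonoidAlgebra k G) = a.coeff g • (MonoidAlgebra.single g (1:k)) := by
    rw [MonoidAlgebra.smul_single', mul_one]
  rw [this, smul_assoc]


variable {W : Type} [AddCommGroup W] [Module k W] (τ : Representation k G W)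

/-- the twisted-tensor insertion operator. -/
def Theta (P : ℕ) (p : Fin P) :
    MonoidAlgebra k G →ₗ[k] W →ₗ[k] ((Fin P → MonoidAlgebra k G) ⊗[k] W) :=
  (Finsupp.lsum k fun h => LinearMap.toSpanSingleton k _
    ((TensorProduct.mk k (Fin P → MonoidAlgebra k G) W
      (Pi.single p (MonoidAlgebra.single h (1:k)))) ∘ₗ (τ h⁻¹))) ∘ₗ
    (MonoidAlgebra.coeffLinearEquiv k).toLinearMap

theorem Theta_single (P : ℕ) (p : Fin P) (h : G) (c : k) (w : W) :
    Theta τ P p (MonoidAlgebra.single h c) w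
      = c • ((Pi.single p (MonoidAlgebra.single h (1:k)) : Fin P → MonoidAlgebra k G)
          ⊗ₜ[k] τ h⁻¹ w) := by
  show (Finsupp.lsum k _ (Finsupp.single h c) : W →ₗ[k] _) w = _
  rw [Finsupp.lsum_single]
  rfl

theorem pi_single_mul (P : ℕ) (p : Fin P) (a x : MonoidAlgebra k G) :
    a • (Pi.single p x : Fin P → MonoidAlgebra k G) = Pi.single p (a * x) := by
  funext j
  by_cases hj : j = p
  · subst hj; simp
  · simp [Pi.single_eq_of_ne hj]

theorem tau_cancel (g h : G) (w : W) : τ (g * h)⁻¹ (τ g w) = τ h⁻¹ w := by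
  rw [mul_inv_rev, map_mul]
  have : τ g⁻¹ (τ g w) = w := by
    have := LinearMap.congr_fun ((map_mul τ g⁻¹ g).symm.trans (by rw [inv_mul_cancel, map_one])) w
    simpa using this
  simp [Module.End.mul_apply, this]

theorem Theta_act (P : ℕ) (p : Fin P) (g : G) (b : MonoidAlgebra k G) (w : W) :
    (MonoidAlgebra.single g (1:k)) • (Theta τ P p b w)
      = Theta τ P p (MonoidAlgebra.single g (1:k) * b) (τ g w) := by
  induction b using MonoidAlgebra.induction_linear with
  | zero => simp
  | add b b' hb hb' => rw [map_add, LinearMap.add_apply, smul_add, hb, hb', mul_add, map_add,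
      LinearMap.add_apply]
  | single h c =>
    rw [Theta_single, MonoidAlgebra.single_mul_single, one_mul, Theta_single]
    rw [smul_comm, TensorProduct.smul_tmul', pi_single_mul, MonoidAlgebra.single_mul_single,
      one_mul, tau_cancel]

variable {V : Type} [AddCommGroup V] [Module k V] (ρ : Representation k G V)

/-- `w ↦ v ⊗ w` as a map into the diagonal module. -/
def sigmaMap (v : V) : W →ₗ[k] (ρ.tprod τ).asModule where
  toFun w0 := (ρ.tprod τ).asModuleEquiv.symm (v ⊗ₜ[k] w0)
  map_add' w1 w2 := by rw [tmul_add, map_add]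
  map_smul' c w0 := by rw [tmul_smul, RingHom.id_apply]; rfl

/-- the evaluation map from the free-module tensor to the diagonal module. -/
def Psi (P : ℕ) (y' : Fin P → ρ.asModule) :
    ((Fin P → MonoidAlgebra k G) ⊗[k] W) →ₗ[k] (ρ.tprod τ).asModule :=
  TensorProduct.lift
  { toFun := fun f =>
      { toFun := fun w0 => ∑ p, f p • sigmaMap τ ρ (ρ.asModuleEquiv (y' p)) w0
        map_add' := fun w1 w2 => by
          simp only [map_add, smul_add, Finset.sum_add_distrib]
        map_smul' := fun c w0 => by
          simp only [map_smul, RingHom.id_apply, Finset.smul_sum]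
          exact Finset.sum_congr rfl fun p _ => (smul_comm _ _ _) }
    map_add' := fun f f' => by
      ext w0
      simp only [LinearMap.coe_mk, AddHom.coe_mk, LinearMap.add_apply, Pi.add_apply, add_smul,
        Finset.sum_add_distrib]
    map_smul' := fun c f => by
      ext w0
      simp only [LinearMap.coe_mk, AddHom.coe_mk, RingHom.id_apply, LinearMap.smul_apply,
        Pi.smul_apply, Finset.smul_sum, smul_assoc] }

theorem Psi_tmul (P : ℕ) (y' : Fin P → ρ.asModule) (f : Fin P → MonoidAlgebra k G) (w0 : W) :
    Psi τ ρ P y' (f ⊗ₜ[k] w0) = ∑ p, f p • sigmaMap τ ρ (ρ.asModuleEquiv (y' p)) w0 := rfl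

theorem Psi_smul (P : ℕ) (y' : Fin P → ρ.asModule) (a : MonoidAlgebra k G)
    (z : (Fin P → MonoidAlgebra k G) ⊗[k] W) :
    Psi τ ρ P y' (a • z) = a • Psi τ ρ P y' z := by
  induction z using TensorProduct.induction_on with
  | zero => rw [smul_zero, map_zero, smul_zero]
  | add z1 z2 h1 h2 => rw [smul_add, map_add, map_add, smul_add, h1, h2]
  | tmul f w0 =>
    rw [TensorProduct.smul_tmul', Psi_tmul, Psi_tmul, Finset.smul_sum]
    exact Finset.sum_congr rfl fun p _ => by rw [Pi.smul_apply, smul_eq_mul, mul_smul]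

theorem Psi_Theta (P : ℕ) (y' : Fin P → ρ.asModule) (p : Fin P) (b : MonoidAlgebra k G)
    (w0 : W) :
    Psi τ ρ P y' (Theta τ P p b w0)
      = (ρ.tprod τ).asModuleEquiv.symm ((ρ.asModuleEquiv (b • y' p)) ⊗ₜ[k] w0) := by
  induction b using MonoidAlgebra.induction_linear with
  | zero => simp [map_zero]
  | add b b' hb hb' =>
    rw [map_add, LinearMap.add_apply, map_add, hb, hb', add_smul, map_add, add_tmul, map_add]
  | single h c =>
    rw [Theta_single, map_smul, Psi_tmul]
    rw [Finset.sum_eq_single p ?h1 ?h2]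
    case h1 =>
      intro p' _ hp'
      rw [Pi.single_eq_of_ne hp', zero_smul]
    case h2 => intro hmem; exact absurd (Finset.mem_univ p) hmem
    rw [Pi.single_eq_same]
    -- LHS: c • (single h 1 • sigmaMap (yv p) (τ h⁻¹ w0))
    have hσ : (MonoidAlgebra.single h (1:k)) • sigmaMap τ ρ (ρ.asModuleEquiv (y' p)) (τ h⁻¹ w0)
        = (ρ.tprod τ).asModuleEquiv.symm ((ρ h (ρ.asModuleEquiv (y' p))) ⊗ₜ[k] w0) := by
      show (MonoidAlgebra.single h (1:k)) •
          (ρ.tprod τ).asModuleEquiv.symm ((ρ.asModuleEquiv (y' p)) ⊗ₜ[k] τ h⁻¹ w0) = _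
      rw [single_one_smul_symm]
      congr 1
      rw [Representation.tprod_apply, TensorProduct.map_tmul]
      congr 1
      have := LinearMap.congr_fun ((map_mul τ h h⁻¹).symm.trans (by rw [mul_inv_cancel, map_one])) w0
      simpa using this
    rw [hσ]
    -- RHS: single h c • y' p
    have hr : ρ.asModuleEquiv ((MonoidAlgebra.single h c) • y' p)
        = c • ρ h (ρ.asModuleEquiv (y' p)) := by
      rw [asModule_smul_def]
      rw [Representation.asAlgebraHom_single]
      rfl
    rw [hr, ← TensorProduct.smul_tmul', asModuleEquiv_symm_smul_k]

end GroupRings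

namespace GroupRings

variable (k : Type) [CommRing k] (G : Type) [Group G]

/-- If `M` is a flat `kG`-module and `N` is a `kG`-module that is flat
over `k`, then the diagonal `kG`-module `M ⊗_k N` is flat. -/
theorem stmt1 {V W : Type} [AddCommGroup V] [Module k V] [AddCommGroup W] [Module k W]
    (ρ : Representation k G V) (τ : Representation k G W)
    (hM : FlatMod (MonoidAlgebra k G) ρ.asModule)
    (hN : Module.Flat k W) :
    FlatMod (MonoidAlgebra k G) (ρ.tprod τ).asModule := by
  classical
  haveI : Module.Flat k W := hN
  intro n a x hx
  set E' := (ρ.tprod τ).asModuleEquiv with hE'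
  set EV := ρ.asModuleEquiv with hEV
  set X : Fin n → V ⊗[k] W := fun i => E' (x i) with hX
  obtain ⟨T, m, w, hpres⟩ := presLeft X
  set S : Finset G := Finset.univ.biUnion (fun i => (a i).coeff.support) with hSdef
  have hSsub : ∀ i, (a i).coeff.support ⊆ S := fun i => by
    rw [hSdef]; exact Finset.subset_biUnion_of_mem (fun i => (a i).coeff.support) (Finset.mem_univ i)
  have hexp : ∀ (z : (ρ.tprod τ).asModule) (i : Fin n),
      E' (a i • z) = ∑ g ∈ S, (a i).coeff g • (TensorProduct.map (ρ g) (τ g) (E' z)) := by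
    intro z i
    rw [smul_expand S (a i) (hSsub i) z, map_sum]
    refine Finset.sum_congr rfl fun g _ => ?_
    rw [asModuleEquiv_smul_k]
    congr 1
    rw [single_one_smul_asModule]
    rw [Representation.tprod_apply]
  have hx' : (∑ gt : {g // g ∈ S} × Fin T,
      (ρ (gt.1 : G) (m gt.2)) ⊗ₜ[k] (∑ i, (a i).coeff (gt.1 : G) • τ (gt.1 : G) (w i gt.2))) = 0 := by
    calc (∑ gt : {g // g ∈ S} × Fin T,
        (ρ (gt.1 : G) (m gt.2)) ⊗ₜ[k] (∑ i, (a i).coeff (gt.1 : G) • τ (gt.1 : G) (w i gt.2)))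
        = ∑ gt : {g // g ∈ S} × Fin T, ∑ i,
            (a i).coeff (gt.1 : G) • ((ρ (gt.1 : G) (m gt.2)) ⊗ₜ[k] τ (gt.1 : G) (w i gt.2)) := by
          refine Finset.sum_congr rfl fun gt _ => ?_
          rw [tmul_sum]
          exact Finset.sum_congr rfl fun i _ => (tmul_smul _ _ _)
      _ = ∑ i, ∑ gt : {g // g ∈ S} × Fin T,
            (a i).coeff (gt.1 : G) • ((ρ (gt.1 : G) (m gt.2)) ⊗ₜ[k] τ (gt.1 : G) (w i gt.2)) :=
          Finset.sum_comm
      _ = ∑ i, E' (a i • x i) := by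
          refine Finset.sum_congr rfl fun i _ => ?_
          rw [hexp (x i) i, ← Finset.sum_coe_sort S
            (fun g => (a i).coeff g • (TensorProduct.map (ρ g) (τ g) (E' (x i)))), Fintype.sum_prod_type]
          refine Finset.sum_congr rfl fun g _ => ?_
          rw [show E' (x i) = X i from rfl, hpres i, map_sum, Finset.smul_sum]
          refine Finset.sum_congr rfl fun t _ => ?_
          rw [TensorProduct.map_tmul]
      _ = E' (∑ i, a i • x i) := (map_sum E' _ _).symm
      _ = 0 := by rw [hx, map_zero]
  obtain ⟨q, c, u, hcu, hcm⟩ := flat_relation _ _ hx'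
  set α : Fin q → Fin T → MonoidAlgebra k G :=
    fun s t => ∑ g : {g // g ∈ S}, MonoidAlgebra.single (g : G) (c (g, t) s) with hα
  set mM : Fin T → ρ.asModule := fun t => EV.symm (m t) with hmM
  have hrel : ∀ s, (∑ t, α s t • mM t) = 0 := by
    intro s
    apply EV.injective
    rw [map_sum, map_zero]
    calc (∑ t, EV (α s t • mM t))
        = ∑ t, ∑ g : {g // g ∈ S}, c (g, t) s • (ρ (g : G) (m t)) := by
          refine Finset.sum_congr rfl fun t _ => ?_
          rw [hα]
          rw [Finset.sum_smul, map_sum]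
          refine Finset.sum_congr rfl fun g _ => ?_
          rw [asModule_smul_def]
          rw [Representation.asAlgebraHom_single]
          rw [hmM, EV.apply_symm_apply]
          rfl
      _ = ∑ gt : {g // g ∈ S} × Fin T, c gt s • ρ (gt.1 : G) (m gt.2) := by
          rw [Fintype.sum_prod_type]
          exact Finset.sum_comm
      _ = 0 := hcm s
  obtain ⟨P, β, y', hy1, hy2⟩ := flatMod_system hM q α mM hrel
  set Θ := Theta (k := k) (G := G) τ P with hΘ
  set Ψ := Psi τ ρ P y' with hΨ
  set ξ : Fin n → ((Fin P → MonoidAlgebra k G) ⊗[k] W) :=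
    fun i => ∑ t, ∑ p, Θ p (β t p) (w i t) with hξdef
  have hΨξ : ∀ i, Ψ (ξ i) = x i := by
    intro i
    rw [hξdef]
    rw [map_sum]
    calc (∑ t, Ψ (∑ p, Θ p (β t p) (w i t)))
        = ∑ t, E'.symm ((∑ p, EV (β t p • y' p)) ⊗ₜ[k] w i t) := by
          refine Finset.sum_congr rfl fun t _ => ?_
          rw [map_sum, sum_tmul, map_sum]
          exact Finset.sum_congr rfl fun p _ => Psi_Theta τ ρ P y' p (β t p) (w i t)
      _ = ∑ t, E'.symm ((m t) ⊗ₜ[k] w i t) := by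
          refine Finset.sum_congr rfl fun t _ => ?_
          rw [← map_sum EV, ← hy1 t, hmM, EV.apply_symm_apply]
      _ = x i := by
          rw [← map_sum E'.symm, ← hpres i, hX, E'.symm_apply_apply]
  have hξ0 : (∑ i, a i • ξ i) = 0 := by
    calc (∑ i, a i • ξ i)
        = ∑ i, ∑ t, ∑ p, ∑ g ∈ S,
            (a i).coeff g • ((MonoidAlgebra.single g (1:k)) • Θ p (β t p) (w i t)) := by
          refine Finset.sum_congr rfl fun i _ => ?_
          rw [hξdef, Finset.smul_sum]
          refine Finset.sum_congr rfl fun t _ => ?_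
          rw [Finset.smul_sum]
          exact Finset.sum_congr rfl fun p _ => smul_expand S (a i) (hSsub i) _
      _ = ∑ t, ∑ p, ∑ g ∈ S, ∑ i,
            (a i).coeff g • ((MonoidAlgebra.single g (1:k)) • Θ p (β t p) (w i t)) := by
          rw [Finset.sum_comm]
          refine Finset.sum_congr rfl fun t _ => ?_
          rw [Finset.sum_comm]
          refine Finset.sum_congr rfl fun p _ => ?_
          rw [Finset.sum_comm]
      _ = ∑ t, ∑ p, ∑ g : {g // g ∈ S},
            Θ p (MonoidAlgebra.single (g : G) (1:k) * β t p) (∑ i, (a i).coeff (g : G) • τ (g : G) (w i t)) := by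
          refine Finset.sum_congr rfl fun t _ => ?_
          refine Finset.sum_congr rfl fun p _ => ?_
          rw [← Finset.sum_coe_sort S (fun g => ∑ i,
            (a i).coeff g • ((MonoidAlgebra.single g (1:k)) • Θ p (β t p) (w i t)))]
          refine Finset.sum_congr rfl fun g _ => ?_
          rw [map_sum]
          refine Finset.sum_congr rfl fun i _ => ?_
          rw [Theta_act, map_smul]
      _ = ∑ t, ∑ p, ∑ g : {g // g ∈ S}, ∑ s,
            Θ p (MonoidAlgebra.single (g : G) (c (g, t) s) * β t p) (u s) := by
          refine Finset.sum_congr rfl fun t _ => ?_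
          refine Finset.sum_congr rfl fun p _ => ?_
          refine Finset.sum_congr rfl fun g _ => ?_
          rw [hcu (g, t), map_sum]
          refine Finset.sum_congr rfl fun s _ => ?_
          rw [map_smul]
          have hsingle : (MonoidAlgebra.single (g : G) (c (g, t) s) : MonoidAlgebra k G)
              = c (g, t) s • MonoidAlgebra.single (g : G) (1:k) := by
            rw [MonoidAlgebra.smul_single', mul_one]
          rw [hsingle, smul_mul_assoc, map_smul]
          rfl
      _ = ∑ p, ∑ s, Θ p (∑ t, α s t * β t p) (u s) := by
          rw [Finset.sum_comm]
          refine Finset.sum_congr rfl fun p _ => ?_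
          calc (∑ t, ∑ g : {g // g ∈ S}, ∑ s,
                Θ p (MonoidAlgebra.single (g : G) (c (g, t) s) * β t p) (u s))
              = ∑ t, ∑ s, ∑ g : {g // g ∈ S},
                Θ p (MonoidAlgebra.single (g : G) (c (g, t) s) * β t p) (u s) := by
                exact Finset.sum_congr rfl fun t _ => Finset.sum_comm
            _ = ∑ s, ∑ t, ∑ g : {g // g ∈ S},
                Θ p (MonoidAlgebra.single (g : G) (c (g, t) s) * β t p) (u s) :=
                Finset.sum_comm
            _ = ∑ s, Θ p (∑ t, α s t * β t p) (u s) := by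
                refine Finset.sum_congr rfl fun s _ => ?_
                rw [map_sum, LinearMap.sum_apply]
                refine Finset.sum_congr rfl fun t _ => ?_
                rw [hα, Finset.sum_mul, map_sum, LinearMap.sum_apply]
      _ = 0 := by
          refine Finset.sum_eq_zero fun p _ => Finset.sum_eq_zero fun s _ => ?_
          rw [hy2 s p, map_zero, LinearMap.zero_apply]
  obtain ⟨mJ, b, ζ, hb1, hb2⟩ :=
    flat_free_tensor (k := k) (A := MonoidAlgebra k G) (W := W) P n a ξ hξ0
  refine ⟨mJ, b, fun j => Ψ (ζ j), fun i => ?_, hb2⟩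
  rw [← hΨξ i, hb1 i, map_sum]
  exact Finset.sum_congr rfl fun j _ => Psi_smul τ ρ P y' (b i j) (ζ j)

end GroupRings
end
end

section
/- Let k be a commutative ring, G a group, M a projective kG-module and N a kG-module that is injective as a k-module. Then the diagonal kG-module Hom_k(M,N), with G-action (g·f)(x) = g f(g^{-1} x), is injective. -/
open TensorProduct CategoryTheory

noncomputable section

noncomputable section
namespace GroupRingsAux

variable {k : Type} [CommRing k] {G : Type} [Group G]

theorem aux_injective_of_retract (A : Type) [Ring A] {Q J : Type} [AddCommGroup Q] [Module A Q]
    [AddCommGroup J] [Module A J] (hJ : Module.Injective A J)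
    (j : Q →ₗ[A] J) (r : J →ₗ[A] Q) (hrj : ∀ x, r (j x) = x) : Module.Injective A Q := by
  constructor
  intro X Y _ _ _ _ i hi f
  obtain ⟨h, hh⟩ := hJ.out i hi (j ∘ₗ f)
  exact ⟨r ∘ₗ h, fun x => by simp [hh x, hrj]⟩

theorem aux_injective_pi (R : Type) [Ring R] (ι : Type) {W : Type} [AddCommGroup W] [Module R W]
    (hW : Module.Injective R W) : Module.Injective R (ι → W) := by
  constructor
  intro X Y _ _ _ _ i hi f
  have H : ∀ s : ι, ∃ h : Y →ₗ[R] W, ∀ x, h (i x) = ((LinearMap.proj s : (ι → W) →ₗ[R] W) ∘ₗ f) x :=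
    fun s => hW.out i hi ((LinearMap.proj s) ∘ₗ f)
  simp only [LinearMap.comp_apply, LinearMap.proj_apply] at H
  choose h hh using H
  refine ⟨LinearMap.pi h, fun x => funext fun s => hh s x⟩

theorem asModule_smul_def {V : Type} [AddCommGroup V] [Module k V] (ρ : Representation k G V)
    (r : MonoidAlgebra k G) (x : ρ.asModule) : r • x = ρ.asAlgebraHom r x := rfl

theorem asModule_of_smul {V : Type} [AddCommGroup V] [Module k V] (ρ : Representation k G V)
    (g : G) (x : ρ.asModule) : (MonoidAlgebra.of k G g) • x = ρ g x := by
  rw [asModule_smul_def, Representation.asAlgebraHom_of]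

theorem asModule_algebraMap_smul {V : Type} [AddCommGroup V] [Module k V]
    (ρ : Representation k G V) (c : k) (x : ρ.asModule) :
    (algebraMap k (MonoidAlgebra k G) c) • x = c • x := by
  rw [asModule_smul_def,
    show (algebraMap k (MonoidAlgebra k G) c) = MonoidAlgebra.single (1 : G) c from rfl,
    Representation.asAlgebraHom_single]
  rw [map_one]
  rfl

/-- an equivariant `k`-linear map induces a `MonoidAlgebra`-linear map between `asModule`s -/
def eqvToLinear {V₁ V₂ : Type} [AddCommGroup V₁] [Module k V₁] [AddCommGroup V₂] [Module k V₂]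
    (ρ₁ : Representation k G V₁) (ρ₂ : Representation k G V₂) (Φ : V₁ →ₗ[k] V₂)
    (hΦ : ∀ (g : G) (x : V₁), Φ (ρ₁ g x) = ρ₂ g (Φ x)) :
    ρ₁.asModule →ₗ[MonoidAlgebra k G] ρ₂.asModule where
  toFun x := Φ x
  map_add' x y := Φ.map_add x y
  map_smul' r x := by
    simp only [RingHom.id_apply, asModule_smul_def]
    show Φ (ρ₁.asAlgebraHom r (ρ₁.asModuleEquiv x)) = ρ₂.asAlgebraHom r (Φ (ρ₁.asModuleEquiv x))
    generalize ρ₁.asModuleEquiv x = y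
    induction r using MonoidAlgebra.induction_linear with
    | zero => simp
    | add a b ha hb => simp only [map_add, LinearMap.add_apply, ha, hb]
    | single g c =>
      rw [Representation.asAlgebraHom_single, Representation.asAlgebraHom_single]
      simp only [LinearMap.smul_apply, map_smul, hΦ]

@[simp] theorem eqvToLinear_apply {V₁ V₂ : Type} [AddCommGroup V₁] [Module k V₁] [AddCommGroup V₂]
    [Module k V₂] (ρ₁ : Representation k G V₁) (ρ₂ : Representation k G V₂) (Φ : V₁ →ₗ[k] V₂)
    (hΦ : ∀ (g : G) (x : V₁), Φ (ρ₁ g x) = ρ₂ g (Φ x)) (x : ρ₁.asModule) :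
    eqvToLinear ρ₁ ρ₂ Φ hΦ x = Φ x := rfl

variable (k G) in
/-- the free `kG`-module on `S`, as a representation -/
def freeRep (S : Type) : Representation k G (S →₀ MonoidAlgebra k G) where
  toFun g := Finsupp.mapRange.linearMap (LinearMap.mulLeft k (MonoidAlgebra.of k G g))
  map_one' := by
    refine LinearMap.ext fun f => Finsupp.ext fun s => ?_
    show MonoidAlgebra.of k G 1 * f s = f s
    rw [map_one, one_mul]
  map_mul' g h := by
    refine LinearMap.ext fun f => Finsupp.ext fun s => ?_
    show MonoidAlgebra.of k G (g * h) * f s = MonoidAlgebra.of k G g * (MonoidAlgebra.of k G h * f s)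
    rw [map_mul, mul_assoc]

theorem freeRep_apply (S : Type) (g : G) (u : S →₀ MonoidAlgebra k G) (s : S) :
    freeRep k G S g u s = MonoidAlgebra.of k G g * u s := by
  simp [freeRep]

theorem freeRep_eq_smul (S : Type) (g : G) (u : S →₀ MonoidAlgebra k G) :
    freeRep k G S g u = MonoidAlgebra.of k G g • u :=
  Finsupp.ext fun s => by rw [freeRep_apply, Finsupp.smul_apply, smul_eq_mul]

end GroupRingsAux

noncomputable section Core
namespace GroupRingsAux

variable {k : Type} [CommRing k] {G : Type} [Group G]

/-- the underlying `k`-linear map of an element of `(ρ.linHom τ).asModule` -/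
def lv {V W : Type} [AddCommGroup V] [Module k V] [AddCommGroup W] [Module k W]
    {ρ : Representation k G V} {τ : Representation k G W}
    (h : (ρ.linHom τ).asModule) : V →ₗ[k] W := h

theorem lv_add {V W : Type} [AddCommGroup V] [Module k V] [AddCommGroup W] [Module k W]
    {ρ : Representation k G V} {τ : Representation k G W}
    (h₁ h₂ : (ρ.linHom τ).asModule) : lv (h₁ + h₂) = lv h₁ + lv h₂ := rfl

theorem lv_ksmul {V W : Type} [AddCommGroup V] [Module k V] [AddCommGroup W] [Module k W]
    {ρ : Representation k G V} {τ : Representation k G W}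
    (c : k) (h : (ρ.linHom τ).asModule) : lv (c • h) = c • lv h := rfl

theorem lv_of_smul {V W : Type} [AddCommGroup V] [Module k V] [AddCommGroup W] [Module k W]
    {ρ : Representation k G V} {τ : Representation k G W}
    (g : G) (h : (ρ.linHom τ).asModule) (v : V) :
    lv (MonoidAlgebra.of k G g • h) v = τ g (lv h (ρ g⁻¹ v)) := by
  rw [asModule_of_smul]
  rfl

theorem lv_inj {V W : Type} [AddCommGroup V] [Module k V] [AddCommGroup W] [Module k W]
    {ρ : Representation k G V} {τ : Representation k G W}
    (h₁ h₂ : (ρ.linHom τ).asModule) (h : lv h₁ = lv h₂) : h₁ = h₂ := h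

theorem freeRep_single (S : Type) (g : G) (s : S) (a : MonoidAlgebra k G) :
    freeRep k G S g (Finsupp.single s a) = Finsupp.single s (MonoidAlgebra.of k G g * a) := by
  show Finsupp.mapRange.linearMap _ _ = _
  simp [Finsupp.mapRange_single]

theorem D_ext (S : Type) {W : Type} [AddCommGroup W] [Module k W] {τ : Representation k G W}
    (h₁ h₂ : ((freeRep k G S).linHom τ).asModule)
    (hh : ∀ (s : S) (g : G) (c : k),
      lv h₁ (Finsupp.single s (MonoidAlgebra.single g c)) =
      lv h₂ (Finsupp.single s (MonoidAlgebra.single g c))) : h₁ = h₂ := by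
  refine lv_inj _ _ ?_
  refine Finsupp.lhom_ext' fun s => ?_
  refine MonoidAlgebra.lhom_ext' fun g => LinearMap.ext_ring ?_
  simpa using hh s g 1

theorem injective_linHom_freeRep (S : Type) {W : Type} [AddCommGroup W] [Module k W]
    (τ : Representation k G W) (hW : Module.Injective k W) :
    Module.Injective (MonoidAlgebra k G) ((freeRep k G S).linHom τ).asModule := by
  classical
  constructor
  intro X Y _ _ _ _ i hi f
  letI mX : Module k X := Module.compHom X (algebraMap k (MonoidAlgebra k G))
  letI mY : Module k Y := Module.compHom Y (algebraMap k (MonoidAlgebra k G))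
  have hsX : ∀ (c : k) (x : X), c • x = algebraMap k (MonoidAlgebra k G) c • x := fun _ _ => rfl
  have hsY : ∀ (c : k) (y : Y), c • y = algebraMap k (MonoidAlgebra k G) c • y := fun _ _ => rfl
  -- the k-linear version of i
  let ik : X →ₗ[k] Y :=
    { toFun := i
      map_add' := i.map_add
      map_smul' := fun c x => by simp only [hsX, hsY, map_smul, RingHom.id_apply] }
  -- curried f
  let φ : X →ₗ[k] (S → W) :=
    { toFun := fun x s => lv (f x) (Finsupp.single s 1)
      map_add' := fun x y => by
        funext s
        show lv (f (x + y)) (Finsupp.single s 1) = _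
        rw [map_add, lv_add]
        rfl
      map_smul' := fun c x => by
        funext s
        show lv (f (c • x)) (Finsupp.single s 1) = c • (lv (f x) (Finsupp.single s 1))
        rw [hsX, map_smul, asModule_algebraMap_smul, lv_ksmul]
        rfl }
  obtain ⟨ψ, hψ⟩ := (aux_injective_pi k S hW).out ik hi φ
  have hψ' : ∀ x, ψ (i x) = φ x := hψ
  -- the candidate extension, as raw function
  let Gf : Y → (((freeRep k G S).linHom τ).asModule) := fun y =>
    Finsupp.lsum k fun s => ((Finsupp.lsum k fun g => LinearMap.toSpanSingleton k W
      (τ g (ψ (MonoidAlgebra.of k G g⁻¹ • y) s))) ∘ₗ (MonoidAlgebra.coeffLinearEquiv k).toLinearMap : MonoidAlgebra k G →ₗ[k] W)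
  have hGf : ∀ (y : Y) (s : S) (g : G) (c : k),
      lv (Gf y) (Finsupp.single s (MonoidAlgebra.single g c)) =
        c • τ g (ψ (MonoidAlgebra.of k G g⁻¹ • y) s) := by
    intro y s g c
    show (Finsupp.lsum k _) (Finsupp.single s (MonoidAlgebra.single g c)) = _
    rw [Finsupp.lsum_single, LinearMap.comp_apply, LinearEquiv.coe_coe,
      MonoidAlgebra.coeffLinearEquiv_apply, MonoidAlgebra.coeff_single, Finsupp.lsum_single,
      LinearMap.toSpanSingleton_apply]
  have hGadd : ∀ y₁ y₂, Gf (y₁ + y₂) = Gf y₁ + Gf y₂ := by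
    intro y₁ y₂
    refine D_ext S _ _ fun s g c => ?_
    rw [lv_add, LinearMap.add_apply, hGf, hGf, hGf, smul_add, map_add, Pi.add_apply, map_add, smul_add]
  -- compatibility with k-scalars
  have hGk : ∀ (c : k) (y : Y), Gf (algebraMap k (MonoidAlgebra k G) c • y) = c • Gf y := by
    intro c y
    refine D_ext S _ _ fun s g' c' => ?_
    rw [hGf, lv_ksmul, LinearMap.smul_apply, hGf]
    have h2 : MonoidAlgebra.of k G g'⁻¹ • (algebraMap k (MonoidAlgebra k G) c • y)
        = c • (MonoidAlgebra.of k G g'⁻¹ • y) := by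
      rw [smul_smul, ← Algebra.commutes, ← smul_smul, ← hsY]
    rw [h2, ψ.map_smul, Pi.smul_apply, (τ g').map_smul, smul_comm]
  -- compatibility with group elements
  have hGg : ∀ (g : G) (y : Y),
      Gf (MonoidAlgebra.of k G g • y) = MonoidAlgebra.of k G g • Gf y := by
    intro g y
    refine D_ext S _ _ fun s g' c' => ?_
    rw [hGf, lv_of_smul, freeRep_single]
    rw [show MonoidAlgebra.of k G g⁻¹ * MonoidAlgebra.single g' c'
        = MonoidAlgebra.single (g⁻¹ * g') c' by
      rw [MonoidAlgebra.of_apply, MonoidAlgebra.single_mul_single, one_mul]]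
    rw [hGf]
    rw [show MonoidAlgebra.of k G g'⁻¹ • MonoidAlgebra.of k G g • y
        = MonoidAlgebra.of k G (g'⁻¹ * g) • y by rw [smul_smul, ← map_mul]]
    rw [(τ g).map_smul]
    have e1 : (g⁻¹ * g')⁻¹ = g'⁻¹ * g := by group
    have e2 : ∀ w, τ g (τ (g⁻¹ * g') w) = τ g' w := by
      intro w
      rw [← Module.End.mul_apply, ← map_mul, mul_inv_cancel_left]
    rw [e1, e2]
  -- full `MonoidAlgebra`-linearity
  have hGsmul : ∀ (r : MonoidAlgebra k G) (y : Y), Gf (r • y) = r • Gf y := by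
    intro r
    induction r using MonoidAlgebra.induction_linear with
    | zero =>
      intro y
      rw [zero_smul, zero_smul, ← add_right_cancel_iff (a := Gf 0), ← hGadd, add_zero, zero_add]
    | add a b ha hb =>
      intro y
      rw [add_smul, add_smul, hGadd, ha, hb]
    | single g c =>
      intro y
      have h1 : (MonoidAlgebra.single g c : MonoidAlgebra k G)
          = algebraMap k (MonoidAlgebra k G) c * MonoidAlgebra.of k G g := by
        rw [show algebraMap k (MonoidAlgebra k G) c = MonoidAlgebra.single (1 : G) c from rfl,
          MonoidAlgebra.of_apply, MonoidAlgebra.single_mul_single, one_mul, mul_one]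
      rw [h1, mul_smul, mul_smul, hGk, hGg, asModule_algebraMap_smul]
  -- assemble the extension
  refine ⟨{ toFun := Gf, map_add' := hGadd, map_smul' := hGsmul }, fun x => ?_⟩
  refine D_ext S _ _ fun s g c => ?_
  show lv (Gf (i x)) _ = lv (f x) _
  rw [hGf]
  rw [show MonoidAlgebra.of k G g⁻¹ • i x = i (MonoidAlgebra.of k G g⁻¹ • x) from
    (i.map_smul _ x).symm, hψ' _]
  show c • τ g (lv (f (MonoidAlgebra.of k G g⁻¹ • x)) (Finsupp.single s 1)) = _
  rw [f.map_smul, lv_of_smul, inv_inv, freeRep_single, mul_one]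
  have e3 : ∀ w, τ g (τ g⁻¹ w) = w := by
    intro w
    rw [← Module.End.mul_apply, ← map_mul, mul_inv_cancel, map_one, Module.End.one_apply]
  rw [e3]
  rw [show (Finsupp.single s (MonoidAlgebra.single g c) : S →₀ MonoidAlgebra k G)
      = c • Finsupp.single s (MonoidAlgebra.of k G g) by
    rw [Finsupp.smul_single, MonoidAlgebra.of_apply, MonoidAlgebra.smul_single, smul_eq_mul, mul_one]]
  rw [(lv (f x)).map_smul]

end GroupRingsAux
end Core

section Main
namespace GroupRingsAux
variable {k : Type} [CommRing k] {G : Type} [Group G]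

theorem stmt3' {V W : Type} [AddCommGroup V] [Module k V] [AddCommGroup W] [Module k W]
    (ρ : Representation k G V) (τ : Representation k G W)
    (hM : Module.Projective (MonoidAlgebra k G) ρ.asModule)
    (hN : Module.Injective k W) :
    Module.Injective (MonoidAlgebra k G) (ρ.linHom τ).asModule := by
  classical
  obtain ⟨sec, hsec⟩ := hM.out
  let π : (ρ.asModule →₀ MonoidAlgebra k G) →ₗ[MonoidAlgebra k G] ρ.asModule :=
    Finsupp.linearCombination (MonoidAlgebra k G) id
  let πk : (ρ.asModule →₀ MonoidAlgebra k G) →ₗ[k] V :=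
    { toFun := fun u => π u
      map_add' := fun u v => π.map_add u v
      map_smul' := fun c u => by
        show π (c • u) = c • π u
        rw [← algebraMap_smul (MonoidAlgebra k G) c u, π.map_smul, asModule_algebraMap_smul] }
  let sk : V →ₗ[k] (ρ.asModule →₀ MonoidAlgebra k G) :=
    { toFun := fun v => sec v
      map_add' := fun u v => sec.map_add u v
      map_smul' := fun c v => by
        show sec (c • v) = c • sec v
        exact (congrArg sec (asModule_algebraMap_smul ρ c v).symm).trans
          ((sec.map_smul _ _).trans (algebraMap_smul (MonoidAlgebra k G) c (sec v))) }
  have hπeq : ∀ (g : G) (u : ρ.asModule →₀ MonoidAlgebra k G),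
      πk (freeRep k G ρ.asModule g u) = ρ g (πk u) := by
    intro g u
    show π (freeRep k G ρ.asModule g u) = ρ g (π u)
    rw [freeRep_eq_smul, π.map_smul, asModule_of_smul]
  have hseq : ∀ (g : G) (v : V), sk (ρ g v) = freeRep k G ρ.asModule g (sk v) := by
    intro g v
    show sec (ρ g v) = freeRep k G ρ.asModule g (sec v)
    rw [freeRep_eq_smul]
    exact (congrArg sec (asModule_of_smul ρ g v).symm).trans (sec.map_smul _ _)
  let P := eqvToLinear (ρ.linHom τ) ((freeRep k G ρ.asModule).linHom τ)
    (LinearMap.lcomp k W πk) (by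
      intro g h
      refine LinearMap.ext fun u => ?_
      simp only [LinearMap.lcomp_apply, Representation.linHom_apply, LinearMap.comp_apply]
      rw [← hπeq])
  let R := eqvToLinear ((freeRep k G ρ.asModule).linHom τ) (ρ.linHom τ)
    (LinearMap.lcomp k W sk) (by
      intro g h
      refine LinearMap.ext fun v => ?_
      simp only [LinearMap.lcomp_apply, Representation.linHom_apply, LinearMap.comp_apply]
      rw [hseq])
  refine aux_injective_of_retract (MonoidAlgebra k G)
    (injective_linHom_freeRep ρ.asModule τ hN) P R fun h => ?_
  refine lv_inj _ _ ?_
  refine LinearMap.ext fun v => ?_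
  show lv h (π (sec v)) = lv h v
  rw [hsec v]

end GroupRingsAux
end Main

namespace GroupRings

variable (k : Type) [CommRing k] (G : Type) [Group G]

/-- If `M` is a projective `kG`-module and `N` is a `kG`-module that is
injective over `k`, then the diagonal `kG`-module `Hom_k(M,N)` is injective. -/
theorem stmt3 {V W : Type} [AddCommGroup V] [Module k V] [AddCommGroup W] [Module k W]
    (ρ : Representation k G V) (τ : Representation k G W)
    (hM : Module.Projective (MonoidAlgebra k G) ρ.asModule)
    (hN : Module.Injective k W) :
    Module.Injective (MonoidAlgebra k G) (ρ.linHom τ).asModule :=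
  GroupRingsAux.stmt3' ρ τ hM hN

end GroupRings
end
end
end

section
/- Let k be a commutative ring, G a group, M a kG-module that is flat as a k-module, and N an injective kG-module. Then the diagonal kG-module Hom_k(M,N) is injective. -/
open TensorProduct CategoryTheory

noncomputable section

namespace GroupRings

variable (k : Type) [CommRing k] (G : Type) [Group G]

/-- If `M` is a `kG`-module that is flat over `k` and `N` is an injective
`kG`-module, then the diagonal `kG`-module `Hom_k(M,N)` is injective. -/
theorem stmt6 {V W : Type} [AddCommGroup V] [Module k V] [AddCommGroup W] [Module k W]
    (ρ : Representation k G V) (τ : Representation k G W)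
    (hM : Module.Flat k V)
    (hN : Module.Injective (MonoidAlgebra k G) τ.asModule) :
    Module.Injective (MonoidAlgebra k G) (ρ.linHom τ).asModule := by
  haveI : CategoryTheory.Injective (ModuleCat.of (MonoidAlgebra k G) τ.asModule) :=
    @Module.injective_object_of_injective_module _ _ _ _ _ hN
  haveI hτ : CategoryTheory.Injective (Rep.of τ) :=
    ((Rep.equivalenceModuleMonoidAlgebra).map_injective_iff (Rep.of τ)).mp
      (by assumption)
  haveI : (MonoidalCategory.tensorLeft (Rep.of ρ)).PreservesMonomorphisms := by
    constructor
    intro X Y f hf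
    have hfi : Function.Injective f.hom := (Rep.mono_iff_injective f).mp hf
    rw [Rep.mono_iff_injective]
    exact hM.lTensor_preserves_injective_linearMap f.hom.toLinearMap hfi
  haveI : CategoryTheory.Injective ((Rep.ihom (Rep.of ρ)).obj (Rep.of τ)) :=
    Injective.injective_of_adjoint (ihom.adjunction (Rep.of ρ)) (Rep.of τ)
  haveI : CategoryTheory.Injective
      (ModuleCat.of (MonoidAlgebra k G) (ρ.linHom τ).asModule) :=
    ((Rep.equivalenceModuleMonoidAlgebra).map_injective_iff (Rep.of (ρ.linHom τ))).mpr
      (by assumption)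
  exact (Module.injective_iff_injective_object _ _).mpr this

end GroupRings
end
end
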